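/- arXiv:0710.1042 — 5 statements merged into one kernel-verified Lean document; each statement's English description precedes it below -/
import Mathlib

section
/- Let f be a smooth positive function of (x,z) and u a smooth positive function of x on an open subset of ℝ², and let κ ∈ ℝ. Then the Gaussian curvature of the two-dimensional metric (f⁴/u²) dx² + (f²/u²) dz² equals κ at every point if and only if f and u satisfy the differential equation 2·∂²f/∂z² − ∂²(1/f)/∂x² − ∂/∂x((∂(ln u)/∂x)/f) = −κ·f³/u² at every point. -/
/-!
Since `f > 0`, `√(EG) = f³/u²`. Dividing by it, the `x`-integrand `∂ₓG/√(EG)` becomes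
`−2 (∂ₓ(1/f) + ∂ₓ(ln u)/f)` and the `z`-integrand `∂_zE/√(EG)` becomes `4 ∂_z f`, so
`K = −(u²/f³) (2 ∂²_z f − ∂²ₓ(1/f) − ∂ₓ(∂ₓ(ln u)/f))` pointwise, and the equivalence is a
rearrangement at each point of `Ω`.
-/

open scoped ContDiff

/-- The Gaussian curvature of the two-dimensional metric `E(x,z) dx² + G(x,z) dz²`:
`K = −(1/(2√(EG))) ( ∂/∂x( (∂G/∂x)/√(EG) ) + ∂/∂z( (∂E/∂z)/√(EG) ) )`. -/
noncomputable def gaussCurv (E G : ℝ → ℝ → ℝ) (x z : ℝ) : ℝ :=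
  -(1 / (2 * Real.sqrt (E x z * G x z))) *
    (deriv (fun x' => deriv (fun x'' => G x'' z) x' / Real.sqrt (E x' z * G x' z)) x
      + deriv (fun z' => deriv (fun z'' => E x z'') z' / Real.sqrt (E x z' * G x z')) z)

lemma sqrt_pow_four_div_mul_pow_two_div {a : ℝ} (b : ℝ) (ha : 0 ≤ a) :
    √(a ^ 4 / b ^ 2 * (a ^ 2 / b ^ 2)) = a ^ 3 / b ^ 2 := by
  rw [show a ^ 4 / b ^ 2 * (a ^ 2 / b ^ 2) = (a ^ 3 / b ^ 2) ^ 2 by ring]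
  exact Real.sqrt_sq (by positivity)

section
variable {g u : ℝ → ℝ}

lemma deriv_pow_two_div_pow_two_div_sqrt (hg : Differentiable ℝ g) (hu : Differentiable ℝ u)
    (hgpos : ∀ x, 0 < g x) (hu0 : ∀ x, u x ≠ 0) :
    (fun x => deriv (fun x => g x ^ 2 / u x ^ 2) x / √(g x ^ 4 / u x ^ 2 * (g x ^ 2 / u x ^ 2)))
      = fun x => -2 * (deriv (fun x => (g x)⁻¹) x + deriv (fun x => Real.log (u x)) x / g x) := by
  funext x
  have hg0 := (hgpos x).ne'
  have hux0 := hu0 x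
  have hgx := (hg x).hasDerivAt
  have hux := (hu x).hasDerivAt
  rw [sqrt_pow_four_div_mul_pow_two_div _ (hgpos x).le,
    ((hgx.fun_pow 2).fun_div (hux.fun_pow 2) (pow_ne_zero 2 hux0)).deriv,
    (hgx.fun_inv hg0).deriv, (hux.log hux0).deriv]
  field_simp
  ring

lemma deriv_pow_four_div_div_sqrt (hg : Differentiable ℝ g) (hgpos : ∀ z, 0 < g z) {b : ℝ}
    (hb : b ≠ 0) :
    (fun z => deriv (fun z => g z ^ 4 / b ^ 2) z / √(g z ^ 4 / b ^ 2 * (g z ^ 2 / b ^ 2)))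
      = fun z => 4 * deriv g z := by
  funext z
  have hg0 := (hgpos z).ne'
  rw [sqrt_pow_four_div_mul_pow_two_div _ (hgpos z).le,
    (((hg z).hasDerivAt.fun_pow 4).div_const (b ^ 2)).deriv]
  field_simp
  ring

end

theorem gaussCurv_pow_four_div_pow_two_div {f : ℝ → ℝ → ℝ} {u : ℝ → ℝ}
    (hf : ContDiff ℝ ∞ (fun p : ℝ × ℝ => f p.1 p.2)) (hu : ContDiff ℝ ∞ u)
    (hfpos : ∀ x z, 0 < f x z) (hupos : ∀ x, 0 < u x) (x z : ℝ) :
    gaussCurv (fun x z => f x z ^ 4 / u x ^ 2) (fun x z => f x z ^ 2 / u x ^ 2) x z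
      = -(u x ^ 2 / f x z ^ 3) *
        (2 * deriv (deriv (f x)) z
          - deriv (deriv fun x' => (f x' z)⁻¹) x
          - deriv (fun x' => deriv (fun x'' => Real.log (u x'')) x' / f x' z) x) := by
  have hfx : ContDiff ℝ ∞ (fun x' => f x' z) := hf.comp (contDiff_id.prodMk contDiff_const)
  have hfz : ContDiff ℝ ∞ (f x) := hf.comp (contDiff_const.prodMk contDiff_id)
  have hinv : ContDiff ℝ ∞ (deriv fun x' => (f x' z)⁻¹) :=
    (hfx.inv fun x' => (hfpos x' z).ne').deriv'
  have hlog : ContDiff ℝ ∞ (fun x' => deriv (fun x'' => Real.log (u x'')) x' / f x' z) :=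
    ((hu.log fun x' => (hupos x').ne').deriv').div hfx fun x' => (hfpos x' z).ne'
  have hinvx := hinv.differentiable (by simp) x
  have hlogx := hlog.differentiable (by simp) x
  have hfzz : ContDiff ℝ ∞ (deriv (f x)) := hfz.deriv'
  unfold gaussCurv
  rw [sqrt_pow_four_div_mul_pow_two_div _ (hfpos x z).le,
    deriv_pow_two_div_pow_two_div_sqrt (hfx.differentiable (by simp))
      (hu.differentiable (by simp)) (hfpos · z) fun x' => (hupos x').ne',
    deriv_pow_four_div_div_sqrt (hfz.differentiable (by simp)) (hfpos x) (hupos x).ne',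
    deriv_const_mul _ (hinvx.fun_add hlogx), deriv_fun_add hinvx hlogx,
    deriv_const_mul _ (hfzz.differentiable (by simp) z)]
  have := (hfpos x z).ne'
  have := (hupos x).ne'
  field_simp
  ring

theorem stmt3_general (Ω : Set (ℝ × ℝ))
    (f : ℝ → ℝ → ℝ) (u : ℝ → ℝ)
    (hf : ContDiff ℝ ∞ (fun p : ℝ × ℝ => f p.1 p.2)) (hu : ContDiff ℝ ∞ u)
    (hfpos : ∀ x z, 0 < f x z) (hupos : ∀ x, 0 < u x) (κ : ℝ) :
    (∀ p ∈ Ω,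
      gaussCurv (fun x z => (f x z) ^ 4 / (u x) ^ 2) (fun x z => (f x z) ^ 2 / (u x) ^ 2)
        p.1 p.2 = κ) ↔
    (∀ p ∈ Ω,
      2 * deriv (deriv (f p.1)) p.2
        - deriv (deriv fun x => (f x p.2)⁻¹) p.1
        - deriv (fun x => deriv (fun x' => Real.log (u x')) x / f x p.2) p.1
      = -κ * (f p.1 p.2) ^ 3 / (u p.1) ^ 2) := by
  refine forall₂_congr fun p _ => ?_
  rw [gaussCurv_pow_four_div_pow_two_div hf hu hfpos hupos]
  have := (hfpos p.1 p.2).ne'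
  have := (hupos p.1).ne'
  constructor
  · rintro rfl
    field_simp
  · intro h
    rw [h]
    field_simp

/-- For `f = f(x,z) > 0` smooth and `u = u(x) > 0` smooth on an open set `Ω ⊆ ℝ²`, the
Gaussian curvature of the metric `(f⁴/u²) dx² + (f²/u²) dz²` equals the constant `κ` at every
point of `Ω` iff `2 ∂²f/∂z² − ∂²(1/f)/∂x² − ∂/∂x((∂(ln u)/∂x)/f) = −κ f³/u²` on `Ω`. -/
theorem stmt3 (Ω : Set (ℝ × ℝ)) (hΩ : IsOpen Ω)
    (f : ℝ → ℝ → ℝ) (u : ℝ → ℝ)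
    (hf : ContDiff ℝ ∞ (fun p : ℝ × ℝ => f p.1 p.2)) (hu : ContDiff ℝ ∞ u)
    (hfpos : ∀ x z, 0 < f x z) (hupos : ∀ x, 0 < u x) (κ : ℝ) :
    (∀ p ∈ Ω,
      gaussCurv (fun x z => (f x z) ^ 4 / (u x) ^ 2) (fun x z => (f x z) ^ 2 / (u x) ^ 2)
        p.1 p.2 = κ) ↔
    (∀ p ∈ Ω,
      2 * deriv (deriv (f p.1)) p.2
        - deriv (deriv fun x => (f x p.2)⁻¹) p.1
        - deriv (fun x => deriv (fun x' => Real.log (u x')) x / f x p.2) p.1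
      = -κ * (f p.1 p.2) ^ 3 / (u p.1) ^ 2) :=
  stmt3_general Ω f u hf hu hfpos hupos κ
end

section
/- Let u be a smooth positive function of x on an open interval J with a fixed antiderivative U (U' = u), and let A, B, C, D be real constants. Let W ⊆ J × ℝ × ℝ (coordinates (x,y,z)) be a connected open set on which Az + B > 0 and C·U(x) + D > 0. Then the Riemannian metric g = ( u(x)²(Az+B)² / (C·U(x)+D)² ) dx² + ( (C·U(x)+D)² / (Az+B)² ) dy² + dz² on W is locally conformally flat. -/
/-! Write `s = C U₀(x) + D` and `t = A z + B`, and let `α`, `β` be primitives of `u / s` and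
`1 / t`, normalised so that `log s = C α + k₁` and `log t = A β + k₂`. Then
`(t² / s²) g = (t⁴ / s²) (dα² + dβ²) + dy²`, and the logarithm of the radius `r = t² / s` is the
affine, hence harmonic, function `2 A β - C α + const` of `(α, β)`: the plane factor is flat, with
developing map `r e^{iθ}`, `θ = 2 A α + C β`. Concretely `(r cos θ, √(C² + 4A²) y, r sin θ)` pulls
the Euclidean metric back to `(C² + 4A²) (t² / s²) g`, and it is injective where `θ` varies by
less than `2π`. When `A = C = 0` the factor `C² + 4A²` vanishes, but then `g` has constant
coefficients in `(U₀(x), y, z)` and a rescaling of these coordinates is an isometric chart. -/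

open scoped ContDiff Matrix

/-- The Jacobian matrix of a map `ψ : ℝ³ → ℝ³` at a point. -/
noncomputable def Dmat (ψ : (Fin 3 → ℝ) → (Fin 3 → ℝ)) (q : Fin 3 → ℝ) :
    Matrix (Fin 3) (Fin 3) ℝ :=
  fun i j => fderiv ℝ ψ q (Pi.single j 1) i

/-- A smooth metric `G` on an open set `U ⊆ ℝ³` is locally conformally flat if every point of
`U` has an open neighborhood `V ⊆ U` carrying a smooth positive function `lam` and a smooth
injective map `ψ : V → ℝ³` with `(Dψ)ᵀ (Dψ) = lam • G` on `V`. -/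
def IsLocConfFlat (U : Set (Fin 3 → ℝ)) (G : (Fin 3 → ℝ) → Matrix (Fin 3) (Fin 3) ℝ) : Prop :=
  ∀ p ∈ U, ∃ V : Set (Fin 3 → ℝ), IsOpen V ∧ p ∈ V ∧ V ⊆ U ∧
    ∃ (lam : (Fin 3 → ℝ) → ℝ) (ψ : (Fin 3 → ℝ) → (Fin 3 → ℝ)),
      ContDiffOn ℝ ∞ lam V ∧ (∀ q ∈ V, 0 < lam q) ∧
      ContDiffOn ℝ ∞ ψ V ∧ Set.InjOn ψ V ∧
      ∀ q ∈ V, (Dmat ψ q)ᵀ * (Dmat ψ q) = lam q • G q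

open ContinuousLinearMap Real Set

local notation "dx" => (proj 0 : (Fin 3 → ℝ) →L[ℝ] ℝ)
local notation "dy" => (proj 1 : (Fin 3 → ℝ) →L[ℝ] ℝ)
local notation "dz" => (proj 2 : (Fin 3 → ℝ) →L[ℝ] ℝ)

lemma contDiffOn_infty_of_hasDerivAt {f f' : ℝ → ℝ} {J : Set ℝ} (hJ : IsOpen J)
    (hf : ∀ x ∈ J, HasDerivAt f (f' x) x) (hf' : ContDiffOn ℝ ∞ f' J) :
    ContDiffOn ℝ ∞ f J := by
  rw [contDiffOn_infty_iff_deriv_of_isOpen hJ]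
  exact ⟨fun x hx => (hf x hx).differentiableAt.differentiableWithinAt,
    hf'.congr fun x hx => (hf x hx).deriv⟩

lemma injOn_of_hasDerivAt_pos {f f' : ℝ → ℝ} {J : Set ℝ} (hJ : IsOpen J)
    (hJc : IsPreconnected J) (hf : ∀ x ∈ J, HasDerivAt f (f' x) x)
    (hf' : ∀ x ∈ J, 0 < f' x) : InjOn f J := by
  refine (strictMonoOn_of_deriv_pos hJc.ordConnected.convex
    (fun x hx => (hf x hx).continuousAt.continuousWithinAt) fun x hx => ?_).injOn
  rw [hJ.interior_eq] at hx
  exact (hf x hx).deriv ▸ hf' x hx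

lemma contDiffOn_vecCons_three {f g h : (Fin 3 → ℝ) → ℝ} {W : Set (Fin 3 → ℝ)}
    (hf : ContDiffOn ℝ ∞ f W) (hg : ContDiffOn ℝ ∞ g W) (hh : ContDiffOn ℝ ∞ h W) :
    ContDiffOn ℝ ∞ (fun q => ![f q, g q, h q]) W := by
  refine contDiffOn_pi.2 fun i => ?_
  fin_cases i
  exacts [hf, hg, hh]

lemma exists_primitive_div_affine {U v : ℝ → ℝ} {J : Set ℝ} (C D : ℝ)
    (hU : ∀ x ∈ J, HasDerivAt U (v x) x) (hpos : ∀ x ∈ J, 0 < C * U x + D)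
    (hUinj : InjOn U J) :
    ∃ (α : ℝ → ℝ) (k : ℝ), (∀ x ∈ J, HasDerivAt α (v x / (C * U x + D)) x) ∧
      (∀ x ∈ J, log (C * U x + D) = C * α x + k) ∧ InjOn α J := by
  by_cases hC : C = 0
  · subst hC
    refine ⟨fun x => U x / D, log D, fun x hx => by simpa using (hU x hx).div_const D,
      fun x _ => by simp, fun x hx x' hx' h => hUinj hx hx' ?_⟩
    have hD : D ≠ 0 := by simpa using (hpos x hx).ne'
    exact (div_left_inj' hD).1 h
  · refine ⟨fun x => log (C * U x + D) / C, 0, fun x hx => ?_, fun x _ => ?_,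
      fun x hx x' hx' h => hUinj hx hx' ?_⟩
    · exact ((((hU x hx).const_mul C).add_const D).log (hpos x hx).ne').div_const C
        |>.congr_deriv (by field_simp)
    · simp [mul_div_cancel₀ _ hC]
    · have := log_injOn_pos (hpos x hx) (hpos x' hx') ((div_left_inj' hC).1 h)
      exact mul_left_cancel₀ hC (add_right_cancel this)

lemma eq_and_eq_of_polar_eq {r r' θ θ' : ℝ} (hr : 0 < r) (hr' : 0 < r') (hθ : |θ - θ'| < 2 * π)
    (hcos : r * cos θ = r' * cos θ') (hsin : r * sin θ = r' * sin θ') : r = r' ∧ θ = θ' := by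
  have hsq : r ^ 2 = r' ^ 2 := by
    linear_combination (-(r ^ 2)) * sin_sq_add_cos_sq θ + r' ^ 2 * sin_sq_add_cos_sq θ'
      + (r * cos θ + r' * cos θ') * hcos + (r * sin θ + r' * sin θ') * hsin
  have hrr : r = r' := (pow_left_inj₀ hr.le hr'.le two_ne_zero).1 hsq
  subst hrr
  have hc := mul_left_cancel₀ hr.ne' hcos
  have hs := mul_left_cancel₀ hr.ne' hsin
  have h1 : cos (θ - θ') = 1 := by
    rw [cos_sub, hc, hs, ← sq, ← sq, cos_sq_add_sin_sq]
  rw [abs_lt] at hθ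
  exact ⟨rfl, sub_eq_zero.1 ((cos_eq_one_iff_of_lt_of_lt hθ.1 hθ.2).1 h1)⟩

lemma Dmat_eq_of_hasFDerivAt {ψ : (Fin 3 → ℝ) → (Fin 3 → ℝ)} {L : (Fin 3 → ℝ) →L[ℝ] (Fin 3 → ℝ)}
    {q : Fin 3 → ℝ} (h : HasFDerivAt ψ L q) :
    Dmat ψ q = Matrix.of fun i j => L (Pi.single j 1) i := by
  ext i j
  simp [Dmat, h.fderiv]

section Planar

variable {q : Fin 3 → ℝ}

lemma hasFDerivAt_apply_comp {f : ℝ → ℝ} {f' : ℝ} (k : Fin 3) (hf : HasDerivAt f f' (q k)) :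
    HasFDerivAt (fun q : Fin 3 → ℝ => f (q k)) (f' • (proj k : (Fin 3 → ℝ) →L[ℝ] ℝ)) q :=
  hf.comp_hasFDerivAt q (hasFDerivAt_apply k q)

variable {P Q : (Fin 3 → ℝ) → ℝ} {Px Pz Qx Qz : ℝ}

lemma Dmat_planar (c : ℝ) (hP : HasFDerivAt P (Px • dx + Pz • dz) q)
    (hQ : HasFDerivAt Q (Qx • dx + Qz • dz) q) :
    Dmat (fun q => ![P q, c * q 1, Q q]) q = !![Px, 0, Pz; 0, c, 0; Qx, 0, Qz] := by
  have hy : HasFDerivAt (fun q : Fin 3 → ℝ => c * q 1) (c • dy) q :=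
    hasFDerivAt_apply_comp 1 ((hasDerivAt_id _).const_mul c |>.congr_deriv (mul_one c))
  have hψ : HasFDerivAt (fun q => ![P q, c * q 1, Q q])
      (pi ![Px • dx + Pz • dz, c • dy, Qx • dx + Qz • dz]) q := by
    refine hasFDerivAt_pi.2 fun i => ?_
    fin_cases i
    exacts [hP, hy, hQ]
  rw [Dmat_eq_of_hasFDerivAt hψ]
  ext i j
  fin_cases i <;> fin_cases j <;> simp

lemma Dmat_planar_gram {c lam g₀ g₁ g₂ : ℝ} (hP : HasFDerivAt P (Px • dx + Pz • dz) q)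
    (hQ : HasFDerivAt Q (Qx • dx + Qz • dz) q) (h₀ : Px ^ 2 + Qx ^ 2 = lam * g₀)
    (h₁ : c ^ 2 = lam * g₁) (h₂ : Pz ^ 2 + Qz ^ 2 = lam * g₂) (h₀₂ : Px * Pz + Qx * Qz = 0) :
    (Dmat (fun q => ![P q, c * q 1, Q q]) q)ᵀ * Dmat (fun q => ![P q, c * q 1, Q q]) q =
      lam • Matrix.diagonal ![g₀, g₁, g₂] := by
  rw [Dmat_planar c hP hQ, ← Matrix.ext_iff]
  simp [Matrix.mul_apply, Fin.sum_univ_three, Fin.forall_fin_succ, ← sq, h₀, h₁, h₂, h₀₂,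
    mul_comm Pz Px, mul_comm Qz Qx]

lemma hasFDerivAt_mul_apply_zero_two {f g : ℝ → ℝ} {f' g' : ℝ} (hf : HasDerivAt f f' (q 0))
    (hg : HasDerivAt g g' (q 2)) :
    HasFDerivAt (fun q : Fin 3 → ℝ => f (q 0) * g (q 2))
      ((f' * g (q 2)) • dx + (f (q 0) * g') • dz) q := by
  refine ((hasFDerivAt_apply_comp 0 hf).mul (hasFDerivAt_apply_comp 2 hg)).congr_fderiv ?_
  ext v
  simp only [add_apply, smul_apply, proj_apply, smul_eq_mul]
  ring

lemma hasFDerivAt_add_apply_zero_two {f g : ℝ → ℝ} {f' g' : ℝ} (hf : HasDerivAt f f' (q 0))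
    (hg : HasDerivAt g g' (q 2)) :
    HasFDerivAt (fun q : Fin 3 → ℝ => f (q 0) + g (q 2)) (f' • dx + g' • dz) q :=
  (hasFDerivAt_apply_comp 0 hf).add (hasFDerivAt_apply_comp 2 hg)

variable {r θ : (Fin 3 → ℝ) → ℝ} {rx rz θx θz : ℝ}

lemma hasFDerivAt_mul_cos (hr : HasFDerivAt r (rx • dx + rz • dz) q)
    (hθ : HasFDerivAt θ (θx • dx + θz • dz) q) :
    HasFDerivAt (fun q => r q * cos (θ q))
      ((rx * cos (θ q) - r q * sin (θ q) * θx) • dx +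
        (rz * cos (θ q) - r q * sin (θ q) * θz) • dz) q := by
  refine (hr.mul ((hasDerivAt_cos _).comp_hasFDerivAt q hθ)).congr_fderiv ?_
  ext v
  simp only [add_apply, smul_apply, proj_apply, smul_eq_mul, Function.comp_apply]
  ring

lemma hasFDerivAt_mul_sin (hr : HasFDerivAt r (rx • dx + rz • dz) q)
    (hθ : HasFDerivAt θ (θx • dx + θz • dz) q) :
    HasFDerivAt (fun q => r q * sin (θ q))
      ((rx * sin (θ q) + r q * cos (θ q) * θx) • dx +
        (rz * sin (θ q) + r q * cos (θ q) * θz) • dz) q := by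
  refine (hr.mul ((hasDerivAt_sin _).comp_hasFDerivAt q hθ)).congr_fderiv ?_
  ext v
  simp only [add_apply, smul_apply, proj_apply, smul_eq_mul, Function.comp_apply]
  ring

lemma Dmat_polar_gram {c lam g₀ g₁ g₂ : ℝ} (hr : HasFDerivAt r (rx • dx + rz • dz) q)
    (hθ : HasFDerivAt θ (θx • dx + θz • dz) q) (h₀ : rx ^ 2 + (r q * θx) ^ 2 = lam * g₀)
    (h₁ : c ^ 2 = lam * g₁) (h₂ : rz ^ 2 + (r q * θz) ^ 2 = lam * g₂)
    (h₀₂ : rx * rz + r q ^ 2 * (θx * θz) = 0) :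
    (Dmat (fun q => ![r q * cos (θ q), c * q 1, r q * sin (θ q)]) q)ᵀ *
        Dmat (fun q => ![r q * cos (θ q), c * q 1, r q * sin (θ q)]) q =
      lam • Matrix.diagonal ![g₀, g₁, g₂] :=
  Dmat_planar_gram (hasFDerivAt_mul_cos hr hθ) (hasFDerivAt_mul_sin hr hθ)
    (by linear_combination h₀ + (rx ^ 2 + (r q * θx) ^ 2) * cos_sq_add_sin_sq (θ q)) h₁
    (by linear_combination h₂ + (rz ^ 2 + (r q * θz) ^ 2) * cos_sq_add_sin_sq (θ q))
    (by linear_combination h₀₂ + (rx * rz + r q ^ 2 * (θx * θz)) * cos_sq_add_sin_sq (θ q))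

end Planar

lemma injOn_polar {V : Set (Fin 3 → ℝ)} {r θ : (Fin 3 → ℝ) → ℝ} {c : ℝ} (hc : c ≠ 0)
    (hr : ∀ q ∈ V, 0 < r q) (hθ : ∀ q ∈ V, ∀ q' ∈ V, |θ q - θ q'| < 2 * π)
    (hinj : InjOn (fun q => (r q, θ q, q 1)) V) :
    InjOn (fun q => ![r q * cos (θ q), c * q 1, r q * sin (θ q)]) V := by
  intro q hq q' hq' h
  obtain ⟨hrr, hθθ⟩ := eq_and_eq_of_polar_eq (hr q hq) (hr q' hq') (hθ q hq q' hq')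
    (by simpa using congrFun h 0) (by simpa using congrFun h 2)
  have hy : q 1 = q' 1 := mul_left_cancel₀ hc (by simpa using congrFun h 1)
  exact hinj hq hq' (by simp [hrr, hθθ, hy])

lemma isLocConfFlat_of_polarChart {W : Set (Fin 3 → ℝ)}
    {G : (Fin 3 → ℝ) → Matrix (Fin 3) (Fin 3) ℝ} {r θ lam : (Fin 3 → ℝ) → ℝ} {c : ℝ}
    (hW : IsOpen W) (hc : c ≠ 0) (hrC : ContDiffOn ℝ ∞ r W) (hθC : ContDiffOn ℝ ∞ θ W)
    (hr : ∀ q ∈ W, 0 < r q) (hlamC : ContDiffOn ℝ ∞ lam W) (hlam : ∀ q ∈ W, 0 < lam q)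
    (hinj : InjOn (fun q => (r q, θ q, q 1)) W)
    (hG : ∀ q ∈ W, (Dmat (fun q => ![r q * cos (θ q), c * q 1, r q * sin (θ q)]) q)ᵀ *
        Dmat (fun q => ![r q * cos (θ q), c * q 1, r q * sin (θ q)]) q = lam q • G q) :
    IsLocConfFlat W G := by
  intro p hp
  set V := W ∩ θ ⁻¹' Ioo (θ p - π) (θ p + π)
  have hVW : V ⊆ W := inter_subset_left
  have hwindow : ∀ q ∈ V, ∀ q' ∈ V, |θ q - θ q'| < 2 * π := by
    rintro q ⟨-, hq₁, hq₂⟩ q' ⟨-, hq₁', hq₂'⟩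
    rw [abs_lt]
    constructor <;> linarith
  refine ⟨V, hθC.continuousOn.isOpen_inter_preimage hW isOpen_Ioo, ⟨hp, by simp [pi_pos]⟩, hVW,
    lam, _, hlamC.mono hVW, fun q hq => hlam q (hVW hq), ?_,
    injOn_polar hc (fun q hq => hr q (hVW hq)) hwindow (hinj.mono hVW), fun q hq => hG q (hVW hq)⟩
  have hrV := hrC.mono hVW
  have hθV := hθC.mono hVW
  exact contDiffOn_vecCons_three (by fun_prop) (by fun_prop) (by fun_prop)

section PolarChart

variable {u U₀ α β : ℝ → ℝ} {A B C D : ℝ}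

noncomputable def polarRadius (U₀ : ℝ → ℝ) (A B C D : ℝ) (q : Fin 3 → ℝ) : ℝ :=
  (C * U₀ (q 0) + D)⁻¹ * (A * q 2 + B) ^ 2

def polarAngle (α β : ℝ → ℝ) (A C : ℝ) (q : Fin 3 → ℝ) : ℝ :=
  2 * A * α (q 0) + C * β (q 2)

lemma Dmat_polarChart_gram {q : Fin 3 → ℝ} (hU₀ : HasDerivAt U₀ (u (q 0)) (q 0))
    (hα : HasDerivAt α (u (q 0) / (C * U₀ (q 0) + D)) (q 0))
    (hβ : HasDerivAt β (1 / (A * q 2 + B)) (q 2))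
    (hs : 0 < C * U₀ (q 0) + D) (ht : 0 < A * q 2 + B) :
    let r := polarRadius U₀ A B C D
    let θ := polarAngle α β A C
    (Dmat (fun q => ![r q * cos (θ q), √(C ^ 2 + 4 * A ^ 2) * q 1, r q * sin (θ q)]) q)ᵀ *
        Dmat (fun q => ![r q * cos (θ q), √(C ^ 2 + 4 * A ^ 2) * q 1, r q * sin (θ q)]) q =
      ((C ^ 2 + 4 * A ^ 2) * ((A * q 2 + B) ^ 2 / (C * U₀ (q 0) + D) ^ 2)) •
        Matrix.diagonal ![u (q 0) ^ 2 * (A * q 2 + B) ^ 2 / (C * U₀ (q 0) + D) ^ 2,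
          (C * U₀ (q 0) + D) ^ 2 / (A * q 2 + B) ^ 2, 1] := by
  intro r θ
  have hr : HasFDerivAt r ((-(C * u (q 0)) / (C * U₀ (q 0) + D) ^ 2 * (A * q 2 + B) ^ 2) • dx +
      ((C * U₀ (q 0) + D)⁻¹ * (2 * A * (A * q 2 + B))) • dz) q := by
    refine hasFDerivAt_mul_apply_zero_two (((hU₀.const_mul C).add_const D).inv hs.ne')
      ((((hasDerivAt_id _).const_mul A).add_const B).pow 2) |>.congr_fderiv ?_
    ext v
    simp only [add_apply, smul_apply, proj_apply, smul_eq_mul, Pi.inv_apply, Pi.pow_apply, id]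
    field_simp
    ring
  have hθ : HasFDerivAt θ ((2 * A * (u (q 0) / (C * U₀ (q 0) + D))) • dx +
      (C * (1 / (A * q 2 + B))) • dz) q :=
    hasFDerivAt_add_apply_zero_two (hα.const_mul _) (hβ.const_mul _)
  refine Dmat_polar_gram hr hθ ?_ ?_ ?_ ?_
  · simp only [r, polarRadius]
    field_simp
    ring
  · rw [sq_sqrt (by positivity)]
    field_simp
  · simp only [r, polarRadius]
    field_simp
    ring
  · simp only [r, polarRadius]
    field_simp
    ring

lemma injOn_polarCoords {W : Set (Fin 3 → ℝ)} {J K : Set ℝ} {k₁ k₂ : ℝ}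
    (hm : C ^ 2 + 4 * A ^ 2 ≠ 0) (hWJ : ∀ p ∈ W, p 0 ∈ J) (hWK : ∀ p ∈ W, p 2 ∈ K)
    (hs : ∀ x ∈ J, 0 < C * U₀ x + D) (ht : ∀ z ∈ K, 0 < A * z + B)
    (hαlog : ∀ x ∈ J, log (C * U₀ x + D) = C * α x + k₁)
    (hβlog : ∀ z ∈ K, log (A * z + B) = A * β z + k₂)
    (hαinj : InjOn α J) (hβinj : InjOn β K) :
    InjOn (fun q => (polarRadius U₀ A B C D q, polarAngle α β A C q, q 1)) W := by
  have hlog : ∀ p ∈ W,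
      log (polarRadius U₀ A B C D p) = 2 * (A * β (p 2) + k₂) - (C * α (p 0) + k₁) := by
    intro p hp
    rw [polarRadius, log_mul (inv_ne_zero (hs _ (hWJ p hp)).ne')
      (pow_ne_zero 2 (ht _ (hWK p hp)).ne'), log_inv, log_pow, hαlog _ (hWJ p hp),
      hβlog _ (hWK p hp)]
    push_cast
    ring
  intro q hq q' hq' h
  simp only [Prod.mk.injEq] at h
  obtain ⟨hr, hθ, hy⟩ := h
  have e₁ := (hlog q hq).symm.trans ((congrArg log hr).trans (hlog q' hq'))
  simp only [polarAngle] at hθ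
  have h₀ : q 0 = q' 0 := hαinj (hWJ q hq) (hWJ q' hq')
    (mul_left_cancel₀ hm (by linear_combination (-C) * e₁ + 2 * A * hθ))
  have h₂ : q 2 = q' 2 := hβinj (hWK q hq) (hWK q' hq')
    (mul_left_cancel₀ hm (by linear_combination 2 * A * e₁ + C * hθ))
  funext i
  fin_cases i
  exacts [h₀, hy, h₂]

lemma isLocConfFlat_of_sq_add_ne_zero {J : Set ℝ} (hJ : IsOpen J) (hu : ContDiffOn ℝ ∞ u J)
    (hU₀ : ∀ x ∈ J, HasDerivAt U₀ (u x) x) (hU₀inj : InjOn U₀ J)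
    (hs : ∀ x ∈ J, 0 < C * U₀ x + D) (hm : C ^ 2 + 4 * A ^ 2 ≠ 0) {W : Set (Fin 3 → ℝ)}
    (hW : IsOpen W) (hWJ : ∀ p ∈ W, p 0 ∈ J) (ht : ∀ p ∈ W, 0 < A * p 2 + B) :
    IsLocConfFlat W (fun p => Matrix.diagonal
      ![u (p 0) ^ 2 * (A * p 2 + B) ^ 2 / (C * U₀ (p 0) + D) ^ 2,
        (C * U₀ (p 0) + D) ^ 2 / (A * p 2 + B) ^ 2, 1]) := by
  set K : Set ℝ := {z | 0 < A * z + B}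
  have hK : IsOpen K := isOpen_lt continuous_const (by fun_prop)
  obtain ⟨α, k₁, hα, hαlog, hαinj⟩ := exists_primitive_div_affine C D hU₀ hs hU₀inj
  obtain ⟨β, k₂, hβ, hβlog, hβinj⟩ := exists_primitive_div_affine (J := K) (U := fun z => z)
    (v := fun _ => 1) A B (fun z _ => hasDerivAt_id z) (fun z hz => hz) (injOn_id K)
  have hsC : ContDiffOn ℝ ∞ (fun x => C * U₀ x + D) J :=
    (contDiffOn_const.mul (contDiffOn_infty_of_hasDerivAt hJ hU₀ hu)).add contDiffOn_const
  have hαC : ContDiffOn ℝ ∞ α J :=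
    contDiffOn_infty_of_hasDerivAt hJ hα (hu.div hsC fun x hx => (hs x hx).ne')
  have hβC : ContDiffOn ℝ ∞ β K := contDiffOn_infty_of_hasDerivAt hK hβ
    (contDiffOn_const.div (by fun_prop) fun z hz => ne_of_gt hz)
  have hx : ContDiffOn ℝ ∞ (fun q : Fin 3 → ℝ => q 0) W := by fun_prop
  have hz : ContDiffOn ℝ ∞ (fun q : Fin 3 → ℝ => q 2) W := by fun_prop
  have hsW : ContDiffOn ℝ ∞ (fun q : Fin 3 → ℝ => C * U₀ (q 0) + D) W := hsC.comp hx hWJ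
  have hm' : 0 < C ^ 2 + 4 * A ^ 2 := lt_of_le_of_ne (by positivity) hm.symm
  refine isLocConfFlat_of_polarChart (r := polarRadius U₀ A B C D) (θ := polarAngle α β A C)
    (lam := fun q => (C ^ 2 + 4 * A ^ 2) * ((A * q 2 + B) ^ 2 / (C * U₀ (q 0) + D) ^ 2))
    hW (sqrt_ne_zero'.2 hm') ((hsW.inv fun q hq => (hs _ (hWJ q hq)).ne').mul (by fun_prop))
    ((contDiffOn_const.mul (hαC.comp hx hWJ)).add (contDiffOn_const.mul (hβC.comp hz ht)))
    (fun q hq => mul_pos (inv_pos.2 (hs _ (hWJ q hq))) (pow_pos (ht q hq) 2))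
    (contDiffOn_const.mul ((by fun_prop : ContDiffOn ℝ ∞ (fun q => (A * q 2 + B) ^ 2) W).div
      (hsW.pow 2) fun q hq => pow_ne_zero 2 (hs _ (hWJ q hq)).ne'))
    (fun q hq => by have := hs _ (hWJ q hq); have := ht q hq; positivity)
    (injOn_polarCoords hm hWJ ht hs (fun z hz => hz) hαlog hβlog hαinj hβinj)
    fun q hq => Dmat_polarChart_gram (hU₀ _ (hWJ q hq)) (hα _ (hWJ q hq)) (hβ _ (ht q hq))
      (hs _ (hWJ q hq)) (ht q hq)

end PolarChart

lemma isLocConfFlat_of_rescaling {u U₀ : ℝ → ℝ} {J : Set ℝ} {B D : ℝ} (hJ : IsOpen J)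
    (hu : ContDiffOn ℝ ∞ u J) (hU₀ : ∀ x ∈ J, HasDerivAt U₀ (u x) x) (hU₀inj : InjOn U₀ J)
    (hB : B ≠ 0) (hD : D ≠ 0) {W : Set (Fin 3 → ℝ)} (hW : IsOpen W) (hWJ : ∀ p ∈ W, p 0 ∈ J) :
    IsLocConfFlat W
      (fun p => Matrix.diagonal ![u (p 0) ^ 2 * B ^ 2 / D ^ 2, D ^ 2 / B ^ 2, 1]) := by
  intro p hp
  refine ⟨W, hW, hp, subset_rfl, fun _ => 1, fun q => ![B / D * U₀ (q 0), D / B * q 1, q 2],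
    contDiffOn_const, fun _ _ => one_pos, ?_, ?_, fun q hq => ?_⟩
  · have hU₀C : ContDiffOn ℝ ∞ (fun q : Fin 3 → ℝ => U₀ (q 0)) W :=
      (contDiffOn_infty_of_hasDerivAt hJ hU₀ hu).comp (by fun_prop) hWJ
    exact contDiffOn_vecCons_three (contDiffOn_const.mul hU₀C) (by fun_prop) (by fun_prop)
  · intro q hq q' hq' h
    have h₀ : q 0 = q' 0 := hU₀inj (hWJ q hq) (hWJ q' hq')
      (mul_left_cancel₀ (div_ne_zero hB hD) (by simpa using congrFun h 0))
    have h₁ : q 1 = q' 1 := mul_left_cancel₀ (div_ne_zero hD hB) (by simpa using congrFun h 1)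
    funext i
    fin_cases i
    exacts [h₀, h₁, by simpa using congrFun h 2]
  · refine Dmat_planar_gram (Px := B / D * u (q 0)) (Pz := 0) (Qx := 0) (Qz := 1)
      ((hasFDerivAt_apply_comp 0 ((hU₀ _ (hWJ q hq)).const_mul (B / D))).congr_fderiv (by simp))
      ((hasFDerivAt_apply 2 q).congr_fderiv (by simp)) ?_ ?_ ?_ ?_ <;> field_simp <;> ring

theorem stmt5_general (J : Set ℝ) (hJopen : IsOpen J) (hJconn : IsPreconnected J)
    (u U₀ : ℝ → ℝ) (hu : ContDiffOn ℝ ∞ u J) (hupos : ∀ x ∈ J, 0 < u x)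
    (hU₀ : ∀ x ∈ J, HasDerivAt U₀ (u x) x)
    (A B C D : ℝ)
    (W : Set (Fin 3 → ℝ)) (hWopen : IsOpen W)
    (hWJ : ∀ p ∈ W, p 0 ∈ J)
    (hpos₁ : ∀ p ∈ W, 0 < A * p 2 + B) (hpos₂ : ∀ p ∈ W, 0 < C * U₀ (p 0) + D) :
    IsLocConfFlat W (fun p =>
      Matrix.diagonal
        ![(u (p 0)) ^ 2 * (A * p 2 + B) ^ 2 / (C * U₀ (p 0) + D) ^ 2,
          (C * U₀ (p 0) + D) ^ 2 / (A * p 2 + B) ^ 2, 1]) := by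
  have hU₀inj : InjOn U₀ J := injOn_of_hasDerivAt_pos hJopen hJconn hU₀ hupos
  intro p hp
  by_cases hAC : A = 0 ∧ C = 0
  · obtain ⟨rfl, rfl⟩ := hAC
    have hB : B ≠ 0 := by simpa using (hpos₁ p hp).ne'
    have hD : D ≠ 0 := by simpa using (hpos₂ p hp).ne'
    simpa using isLocConfFlat_of_rescaling hJopen hu hU₀ hU₀inj hB hD hWopen hWJ p hp
  · have hm : C ^ 2 + 4 * A ^ 2 ≠ 0 := fun h => hAC ⟨by nlinarith, by nlinarith⟩
    set J₁ := J ∩ {x | 0 < C * U₀ x + D}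
    have hJ₁ : IsOpen J₁ := ContinuousOn.isOpen_inter_preimage
      (fun x hx => (((hU₀ x hx).const_mul C).add_const D).continuousAt.continuousWithinAt)
      hJopen isOpen_Ioi
    exact isLocConfFlat_of_sq_add_ne_zero hJ₁ (hu.mono inter_subset_left)
      (fun x hx => hU₀ x hx.1) (hU₀inj.mono inter_subset_left) (fun x hx => hx.2) hm hWopen
      (fun q hq => ⟨hWJ q hq, hpos₂ q hq⟩) hpos₁ p hp

/-- For `u > 0` smooth on an open interval `J` with antiderivative `U₀`, and constants
`A, B, C, D`, the metric
`g = (u(x)²(Az+B)²/(C·U₀(x)+D)²) dx² + ((C·U₀(x)+D)²/(Az+B)²) dy² + dz²`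
is locally conformally flat on any connected open set `W` (with `x`-coordinates in `J`) on
which `Az+B > 0` and `C·U₀(x)+D > 0`. -/
theorem stmt5 (J : Set ℝ) (hJopen : IsOpen J) (hJconn : IsPreconnected J)
    (u U₀ : ℝ → ℝ) (hu : ContDiffOn ℝ ∞ u J) (hupos : ∀ x ∈ J, 0 < u x)
    (hU₀ : ∀ x ∈ J, HasDerivAt U₀ (u x) x)
    (A B C D : ℝ)
    (W : Set (Fin 3 → ℝ)) (hWopen : IsOpen W) (hWconn : IsConnected W)
    (hWJ : ∀ p ∈ W, p 0 ∈ J)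
    (hpos₁ : ∀ p ∈ W, 0 < A * p 2 + B) (hpos₂ : ∀ p ∈ W, 0 < C * U₀ (p 0) + D) :
    IsLocConfFlat W (fun p =>
      Matrix.diagonal
        ![(u (p 0)) ^ 2 * (A * p 2 + B) ^ 2 / (C * U₀ (p 0) + D) ^ 2,
          (C * U₀ (p 0) + D) ^ 2 / (A * p 2 + B) ^ 2, 1]) :=
  stmt5_general J hJopen hJconn u U₀ hu hupos hU₀ A B C D W hWopen hWJ hpos₁ hpos₂
end

section
/- Let a > 0 and let W ⊆ ℝ² × (0,∞) be an open set with coordinates (x,y,z). Then the Riemannian metric g = z² dx² + (e^{2ax}/z²) dy² + dz² on W is locally conformally flat. -/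
/-!
With `w = log z` the metric reads `g = z² (dx² + dw²) + e^{2ax} z⁻² dy²`, and the linear map
`(x, w) ↦ (u, θ) = (2w - a x, 2x + a w)` is `√(4 + a²)` times an orthogonal map. Hence
`ψ(x, y, z) = (e^u cos θ, e^u sin θ, √(4 + a²) y)` pulls the Euclidean metric back to
`e^{2u} (du² + dθ²) + (4 + a²) dy² = (4 + a²) z² e^{-2ax} g`, because `e^{2u} = z⁴ e^{-2ax}`.
The map `ψ` is injective wherever `θ` stays in an open interval of length `2π`.
-/

open scoped ContDiff Matrix

open Real Matrix

theorem Dmat_eq_toMatrix' (ψ : (Fin 3 → ℝ) → (Fin 3 → ℝ)) (q : Fin 3 → ℝ) :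
    Dmat ψ q = LinearMap.toMatrix' (fderiv ℝ ψ q : (Fin 3 → ℝ) →ₗ[ℝ] Fin 3 → ℝ) :=
  rfl

theorem Dmat_comp {f g : (Fin 3 → ℝ) → (Fin 3 → ℝ)} {q : Fin 3 → ℝ}
    (hf : DifferentiableAt ℝ f (g q)) (hg : DifferentiableAt ℝ g q) :
    Dmat (f ∘ g) q = Dmat f (g q) * Dmat g q := by
  rw [Dmat_eq_toMatrix', fderiv_comp q hf hg]
  exact LinearMap.toMatrix'_comp _ _

theorem Dmat_of_hasFDerivAt {ψ : (Fin 3 → ℝ) → (Fin 3 → ℝ)} {q : Fin 3 → ℝ}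
    {L : Fin 3 → (Fin 3 → ℝ) →L[ℝ] ℝ} (h : ∀ i, HasFDerivAt (fun x => ψ x i) (L i) q) :
    Dmat ψ q = Matrix.of fun i j => L i (Pi.single j 1) := by
  have hψ : HasFDerivAt ψ (ContinuousLinearMap.pi L) q := hasFDerivAt_pi.2 h
  ext i j
  simp [Dmat, hψ.fderiv]

theorem Dmat_mulVec (M : Matrix (Fin 3) (Fin 3) ℝ) (q : Fin 3 → ℝ) :
    Dmat (M *ᵥ ·) q = M := by
  have h : (M *ᵥ ·) = ⇑(LinearMap.toContinuousLinearMap (toLin' M)) := rfl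
  rw [Dmat_eq_toMatrix', h, ContinuousLinearMap.fderiv]
  exact LinearMap.toMatrix'_toLin' M

theorem contDiff_mulVec {m n : Type*} [Fintype m] [Fintype n] [DecidableEq n]
    (M : Matrix m n ℝ) : ContDiff ℝ ∞ (M *ᵥ ·) :=
  (LinearMap.toContinuousLinearMap (toLin' M)).contDiff

noncomputable def logThird (q : Fin 3 → ℝ) : Fin 3 → ℝ := ![q 0, q 1, log (q 2)]

noncomputable def expPolar (v : Fin 3 → ℝ) : Fin 3 → ℝ :=
  ![exp (v 0) * cos (v 1), exp (v 0) * sin (v 1), v 2]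

theorem hasFDerivAt_logThird {q : Fin 3 → ℝ} (hq : q 2 ≠ 0) (i : Fin 3) :
    HasFDerivAt (fun x => logThird x i)
      (![.proj 0, .proj 1, (q 2)⁻¹ • .proj 2] i : (Fin 3 → ℝ) →L[ℝ] ℝ) q := by
  fin_cases i
  · exact hasFDerivAt_apply 0 q
  · exact hasFDerivAt_apply 1 q
  · exact (hasDerivAt_log hq).comp_hasFDerivAt q (hasFDerivAt_apply (𝕜 := ℝ) 2 q)

theorem Dmat_logThird {q : Fin 3 → ℝ} (hq : q 2 ≠ 0) :
    Dmat logThird q = diagonal ![1, 1, (q 2)⁻¹] := by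
  rw [Dmat_of_hasFDerivAt (hasFDerivAt_logThird hq)]
  ext i j
  fin_cases i <;> fin_cases j <;> simp

theorem differentiableAt_logThird {q : Fin 3 → ℝ} (hq : q 2 ≠ 0) :
    DifferentiableAt ℝ logThird q :=
  (hasFDerivAt_pi.2 (hasFDerivAt_logThird hq)).differentiableAt

theorem contDiffOn_logThird : ContDiffOn ℝ ∞ logThird {q | q 2 ≠ 0} := by
  refine contDiffOn_pi.2 fun i => ?_
  fin_cases i
  · exact contDiffOn_apply ℝ ℝ 0 _
  · exact contDiffOn_apply ℝ ℝ 1 _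
  · exact (contDiffOn_apply ℝ ℝ 2 _).log fun q hq => hq

theorem injOn_logThird : Set.InjOn logThird {q | 0 < q 2} := by
  intro q hq q' hq' h
  have h2 : q 2 = q' 2 := log_injOn_pos hq hq' (congrFun h 2)
  ext i
  fin_cases i
  exacts [congrFun h 0, congrFun h 1, h2]

theorem contDiff_expPolar : ContDiff ℝ ∞ expPolar := by
  refine contDiff_pi.2 fun i => ?_
  fin_cases i <;> simp [expPolar] <;> fun_prop

theorem Dmat_expPolar (v : Fin 3 → ℝ) :
    Dmat expPolar v = !![exp (v 0) * cos (v 1), -(exp (v 0) * sin (v 1)), 0;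
      exp (v 0) * sin (v 1), exp (v 0) * cos (v 1), 0; 0, 0, 1] := by
  have hexp := (hasDerivAt_exp (v 0)).comp_hasFDerivAt v (hasFDerivAt_apply (𝕜 := ℝ) 0 v)
  have hcos := (hasDerivAt_cos (v 1)).comp_hasFDerivAt v (hasFDerivAt_apply (𝕜 := ℝ) 1 v)
  have hsin := (hasDerivAt_sin (v 1)).comp_hasFDerivAt v (hasFDerivAt_apply (𝕜 := ℝ) 1 v)
  rw [Dmat_of_hasFDerivAt (L := ![_, _, _]) fun i => by
    fin_cases i
    exacts [hexp.mul hcos, hexp.mul hsin, hasFDerivAt_apply 2 v]]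
  ext i j
  fin_cases i <;> fin_cases j <;> simp [mul_comm]

theorem transpose_mul_self_Dmat_expPolar (v : Fin 3 → ℝ) :
    (Dmat expPolar v)ᵀ * Dmat expPolar v = diagonal ![exp (v 0) ^ 2, exp (v 0) ^ 2, 1] := by
  have h := sin_sq_add_cos_sq (v 1)
  rw [Dmat_expPolar]
  ext i j
  fin_cases i <;> fin_cases j <;> simp [Matrix.mul_apply, Fin.sum_univ_three] <;>
    first | ring1 | linear_combination exp (v 0) ^ 2 * h

theorem injOn_expPolar (t : ℝ) : Set.InjOn expPolar {v | v 1 ∈ Set.Ioo (t - π) (t + π)} := by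
  intro v hv w hw h
  have h0 : exp (v 0) * cos (v 1) = exp (w 0) * cos (w 1) := congrFun h 0
  have h1 : exp (v 0) * sin (v 1) = exp (w 0) * sin (w 1) := congrFun h 1
  have h2 : v 2 = w 2 := congrFun h 2
  have hexp : exp (v 0) = exp (w 0) := by
    refine (pow_left_inj₀ (exp_pos _).le (exp_pos _).le two_ne_zero).1 ?_
    linear_combination (exp (v 0) * cos (v 1) + exp (w 0) * cos (w 1)) * h0 +
      (exp (v 0) * sin (v 1) + exp (w 0) * sin (w 1)) * h1 -
      exp (v 0) ^ 2 * sin_sq_add_cos_sq (v 1) + exp (w 0) ^ 2 * sin_sq_add_cos_sq (w 1)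
  rw [hexp] at h0 h1
  have hcos := mul_left_cancel₀ (exp_pos (w 0)).ne' h0
  have hsin := mul_left_cancel₀ (exp_pos (w 0)).ne' h1
  have h1' : v 1 = w 1 := by
    have : cos (v 1 - w 1) = 1 := by
      rw [cos_sub, hcos, hsin]; linear_combination sin_sq_add_cos_sq (w 1)
    obtain ⟨hv₁, hv₂⟩ := hv
    obtain ⟨hw₁, hw₂⟩ := hw
    linarith [(cos_eq_one_iff_of_lt_of_lt (by linarith) (by linarith)).1 this]
  ext i
  fin_cases i
  exacts [exp_injective hexp, h1', h2]

noncomputable def rotScale (a : ℝ) : Matrix (Fin 3) (Fin 3) ℝ :=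
  !![-a, 0, 2; 2, 0, a; 0, √(4 + a ^ 2), 0]

theorem transpose_rotScale_mul_diagonal_mul (a s : ℝ) :
    (rotScale a)ᵀ * diagonal ![s, s, 1] * rotScale a = (4 + a ^ 2) • diagonal ![s, 1, s] := by
  have h : √(4 + a ^ 2) * √(4 + a ^ 2) = 4 + a ^ 2 := mul_self_sqrt (by positivity)
  ext i j
  fin_cases i <;> fin_cases j <;> simp [rotScale, Matrix.mul_apply, Fin.sum_univ_three, h] <;>
    ring

theorem mulVec_rotScale_injective (a : ℝ) : Function.Injective (rotScale a *ᵥ ·) := by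
  refine mulVec_injective_iff_isUnit.2 ((isUnit_iff_isUnit_det _).2 ?_)
  refine isUnit_iff_ne_zero.2 (ne_of_gt ?_)
  have hc : 0 < √(4 + a ^ 2) := by positivity
  simp [rotScale, det_fin_three]
  nlinarith [mul_nonneg (mul_self_nonneg a) hc.le]

noncomputable def logCoords (a : ℝ) (q : Fin 3 → ℝ) : Fin 3 → ℝ := rotScale a *ᵥ logThird q

theorem logCoords_apply_zero (a : ℝ) (q : Fin 3 → ℝ) :
    logCoords a q 0 = 2 * log (q 2) - a * q 0 := by
  simp [logCoords, logThird, rotScale, mulVec, dotProduct, Fin.sum_univ_three]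
  ring

theorem contDiffOn_logCoords (a : ℝ) : ContDiffOn ℝ ∞ (logCoords a) {q | q 2 ≠ 0} :=
  (contDiff_mulVec _).comp_contDiffOn contDiffOn_logThird

theorem injOn_logCoords (a : ℝ) : Set.InjOn (logCoords a) {q | 0 < q 2} :=
  (mulVec_rotScale_injective a).comp_injOn injOn_logThird

theorem differentiableAt_logCoords (a : ℝ) {q : Fin 3 → ℝ} (hq : q 2 ≠ 0) :
    DifferentiableAt ℝ (logCoords a) q :=
  ((contDiff_mulVec _).differentiable (by simp) _).comp q (differentiableAt_logThird hq)

theorem Dmat_logCoords (a : ℝ) {q : Fin 3 → ℝ} (hq : q 2 ≠ 0) :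
    Dmat (logCoords a) q = rotScale a * diagonal ![1, 1, (q 2)⁻¹] := by
  rw [show logCoords a = (rotScale a *ᵥ ·) ∘ logThird from rfl,
    Dmat_comp ((contDiff_mulVec _).differentiable (by simp) _) (differentiableAt_logThird hq),
    Dmat_mulVec, Dmat_logThird hq]

theorem transpose_mul_self_Dmat_expPolar_comp_logCoords (a : ℝ) {q : Fin 3 → ℝ}
    (hq : 0 < q 2) :
    (Dmat (expPolar ∘ logCoords a) q)ᵀ * Dmat (expPolar ∘ logCoords a) q =
      ((4 + a ^ 2) * q 2 ^ 2 * exp (-(2 * a * q 0))) •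
        diagonal ![q 2 ^ 2, exp (2 * a * q 0) / q 2 ^ 2, 1] := by
  have hexp : exp (logCoords a q 0) ^ 2 = q 2 ^ 4 * exp (-(2 * a * q 0)) := by
    rw [logCoords_apply_zero, ← exp_nat_mul, ← exp_log (pow_pos hq 4), ← exp_add, log_pow]
    congr 1
    push_cast
    ring
  have hreassoc : ∀ P M D : Matrix (Fin 3) (Fin 3) ℝ,
      (P * (M * D))ᵀ * (P * (M * D)) = Dᵀ * (Mᵀ * (Pᵀ * P) * M) * D := by
    intro P M D; simp only [transpose_mul, Matrix.mul_assoc]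
  rw [Dmat_comp (contDiff_expPolar.differentiable (by simp) _)
      (differentiableAt_logCoords a hq.ne'), Dmat_logCoords a hq.ne', hreassoc,
    transpose_mul_self_Dmat_expPolar, hexp, transpose_rotScale_mul_diagonal_mul, diagonal_transpose, Matrix.mul_smul, Matrix.smul_mul,
    diagonal_mul_diagonal, diagonal_mul_diagonal, ← diagonal_smul, ← diagonal_smul]
  congr 1
  ext i
  fin_cases i <;> simp [exp_neg] <;> field_simp

theorem stmt6_general (a : ℝ)
    (W : Set (Fin 3 → ℝ)) (hWopen : IsOpen W) (hWz : ∀ p ∈ W, 0 < p 2) :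
    IsLocConfFlat W (fun p =>
      Matrix.diagonal ![(p 2) ^ 2, Real.exp (2 * a * p 0) / (p 2) ^ 2, 1]) := by
  intro p hp
  set θ₀ := logCoords a p 1
  have hsmooth : ContDiffOn ℝ ∞ (logCoords a) W :=
    (contDiffOn_logCoords a).mono fun q hq => (hWz q hq).ne'
  refine ⟨W ∩ logCoords a ⁻¹' {v | v 1 ∈ Set.Ioo (θ₀ - π) (θ₀ + π)},
    hsmooth.continuousOn.isOpen_inter_preimage hWopen (isOpen_Ioo.preimage (continuous_apply 1)),
    ⟨hp, sub_lt_self θ₀ pi_pos, lt_add_of_pos_right θ₀ pi_pos⟩, Set.inter_subset_left,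
    fun q => (4 + a ^ 2) * q 2 ^ 2 * exp (-(2 * a * q 0)), expPolar ∘ logCoords a,
    by fun_prop, fun q hq => by have := hWz q hq.1; positivity,
    contDiff_expPolar.comp_contDiffOn (hsmooth.mono Set.inter_subset_left),
    (injOn_expPolar θ₀).comp ((injOn_logCoords a).mono fun q hq => hWz q hq.1) fun q hq => hq.2,
    fun q hq => transpose_mul_self_Dmat_expPolar_comp_logCoords a (hWz q hq.1)⟩

/-- For `a > 0`, the metric `g = z² dx² + (e^{2ax}/z²) dy² + dz²` is locally conformally flat
on any open set `W ⊆ ℝ² × (0,∞)`. -/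
theorem stmt6 (a : ℝ) (ha : 0 < a)
    (W : Set (Fin 3 → ℝ)) (hWopen : IsOpen W) (hWz : ∀ p ∈ W, 0 < p 2) :
    IsLocConfFlat W (fun p =>
      Matrix.diagonal ![(p 2) ^ 2, Real.exp (2 * a * p 0) / (p 2) ^ 2, 1]) :=
  stmt6_general a W hWopen hWz
end

section
/- Let κ ≠ 0, let t be a smooth positive nonconstant function of z on an open interval I, let s and u be smooth positive functions of x on an open interval J, and suppose 2·t''(z) − s(x)·((s·u)'/u)'(x)/t(z) = −κ·t(z)³/(s(x)u(x))² holds for all (x,z) ∈ J × I. Then the function x ↦ s(x)·u(x) is constant on J. -/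
open scoped ContDiff

/-!
Multiplying the equation by `t(z)` separates the variables:
`2 t t'' − s ((s·u)'/u)' = −κ t⁴ / (s·u)²`. Subtracting this identity at two points
`x₁, x₂` makes the left side independent of `z`, so `κ t⁴ (1/(s·u)²(x₁) − 1/(s·u)²(x₂))`
is constant in `z`; since `t > 0` is nonconstant, so is `t⁴`, forcing `(s·u)²(x₁) = (s·u)²(x₂)`.
-/

theorem eq_of_forall_sub_eq_mul_mul {α β R : Type*} [CommRing R] [NoZeroDivisors R]
    {I : Set α} {J : Set β} {a p : α → R} {b q : β → R} {c : R} (hc : c ≠ 0)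
    (h : ∀ x ∈ J, ∀ z ∈ I, a z - b x = c * p z * q x)
    {z₁ z₂ : α} (hz₁ : z₁ ∈ I) (hz₂ : z₂ ∈ I) (hp : p z₁ ≠ p z₂)
    {x₁ x₂ : β} (hx₁ : x₁ ∈ J) (hx₂ : x₂ ∈ J) : q x₁ = q x₂ := by
  have hprod : c * ((p z₁ - p z₂) * (q x₁ - q x₂)) = 0 := by
    linear_combination -h x₁ hx₁ z₁ hz₁ + h x₂ hx₂ z₁ hz₁ + h x₁ hx₁ z₂ hz₂ - h x₂ hx₂ z₂ hz₂
  rcases mul_eq_zero.1 hprod with hc0 | hpq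
  · exact absurd hc0 hc
  rcases mul_eq_zero.1 hpq with hp0 | hq0
  · exact absurd (sub_eq_zero.1 hp0) hp
  · exact sub_eq_zero.1 hq0

theorem stmt7_general (κ : ℝ) (hκ : κ ≠ 0) (I J : Set ℝ)
    (t s u : ℝ → ℝ)
    (htpos : ∀ z ∈ I, 0 < t z) (hspos : ∀ x ∈ J, 0 < s x) (hupos : ∀ x ∈ J, 0 < u x)
    (htnc : ∃ z₁ ∈ I, ∃ z₂ ∈ I, t z₁ ≠ t z₂)
    (heq : ∀ x ∈ J, ∀ z ∈ I,
      2 * deriv (deriv t) z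
        - s x * deriv (fun x' => deriv (fun x'' => s x'' * u x'') x' / u x') x / t z
      = -κ * (t z) ^ 3 / (s x * u x) ^ 2) :
    ∀ x₁ ∈ J, ∀ x₂ ∈ J, s x₁ * u x₁ = s x₂ * u x₂ := by
  intro x₁ hx₁ x₂ hx₂
  obtain ⟨z₁, hz₁, z₂, hz₂, hne⟩ := htnc
  have hsu_pos : ∀ x ∈ J, 0 < s x * u x := fun x hx => mul_pos (hspos x hx) (hupos x hx)
  have hseparated : ∀ x ∈ J, ∀ z ∈ I,
      2 * deriv (deriv t) z * t z
        - s x * deriv (fun x' => deriv (fun x'' => s x'' * u x'') x' / u x') x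
      = -κ * t z ^ 4 * ((s x * u x) ^ 2)⁻¹ := by
    intro x hx z hz
    have ht0 := (htpos z hz).ne'
    have e := congrArg (· * t z) (heq x hx z hz)
    simp only [sub_mul, div_mul_cancel₀ _ ht0] at e
    rw [e]
    ring
  have ht4 : t z₁ ^ 4 ≠ t z₂ ^ 4 := by
    rwa [Ne, pow_left_inj₀ (htpos z₁ hz₁).le (htpos z₂ hz₂).le four_ne_zero]
  have hsq := eq_of_forall_sub_eq_mul_mul (neg_ne_zero.2 hκ) hseparated hz₁ hz₂ ht4 hx₁ hx₂
  rwa [inv_inj, pow_left_inj₀ (hsu_pos x₁ hx₁).le (hsu_pos x₂ hx₂).le two_ne_zero] at hsq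

/-- If `κ ≠ 0`, `t > 0` is smooth and nonconstant on an open interval `I`, `s, u > 0` are
smooth on an open interval `J`, and `2 t'' − s ((s·u)'/u)' / t = −κ t³/(s·u)²` holds on
`J × I`, then `s·u` is constant on `J`. -/
theorem stmt7 (κ : ℝ) (hκ : κ ≠ 0) (I J : Set ℝ)
    (hIopen : IsOpen I) (hIconn : IsPreconnected I)
    (hJopen : IsOpen J) (hJconn : IsPreconnected J)
    (t s u : ℝ → ℝ)
    (ht : ContDiffOn ℝ ∞ t I) (hs : ContDiffOn ℝ ∞ s J) (hu : ContDiffOn ℝ ∞ u J)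
    (htpos : ∀ z ∈ I, 0 < t z) (hspos : ∀ x ∈ J, 0 < s x) (hupos : ∀ x ∈ J, 0 < u x)
    (htnc : ∃ z₁ ∈ I, ∃ z₂ ∈ I, t z₁ ≠ t z₂)
    (heq : ∀ x ∈ J, ∀ z ∈ I,
      2 * deriv (deriv t) z
        - s x * deriv (fun x' => deriv (fun x'' => s x'' * u x'') x' / u x') x / t z
      = -κ * (t z) ^ 3 / (s x * u x) ^ 2) :
    ∀ x₁ ∈ J, ∀ x₂ ∈ J, s x₁ * u x₁ = s x₂ * u x₂ :=
  stmt7_general κ hκ I J t s u htpos hspos hupos htnc heq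
end

section
/- Let κ ∈ ℝ, C > 0, and let t : I → ℝ be a smooth positive function on a connected open interval I satisfying t''(z) = −(κ/(2C²))·t(z)³ and t'(z) > 0 for all z ∈ I. Let D := 4C²·t'(z₀)² + κ·t(z₀)⁴ for some (equivalently, any) z₀ ∈ I. Then D − κ·τ⁴ > 0 for every τ in the range of t, and for all z₁, z₂ ∈ I, z₂ − z₁ = ∫_{t(z₁)}^{t(z₂)} 2C/√(D − κ·τ⁴) dτ. -/
open scoped ContDiff

/-- Let `t > 0` be a smooth increasing solution of `t'' = −(κ/(2C²)) t³` on a connected open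
interval `I`, `C > 0`, and `D = 4C² t'(z₀)² + κ t(z₀)⁴` for some `z₀ ∈ I`. Then
`D − κ τ⁴ > 0` on the range of `t`, and `z₂ − z₁ = ∫_{t(z₁)}^{t(z₂)} 2C/√(D − κ τ⁴) dτ`
for all `z₁, z₂ ∈ I`. -/
theorem stmt10 (κ C : ℝ) (hC : 0 < C) (I : Set ℝ)
    (hIopen : IsOpen I) (hIconn : IsPreconnected I)
    (t : ℝ → ℝ) (ht : ContDiffOn ℝ ∞ t I)
    (htpos : ∀ z ∈ I, 0 < t z) (ht' : ∀ z ∈ I, 0 < deriv t z)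
    (hode : ∀ z ∈ I, deriv (deriv t) z = -(κ / (2 * C ^ 2)) * (t z) ^ 3)
    (z₀ : ℝ) (hz₀ : z₀ ∈ I) (D : ℝ)
    (hD : D = 4 * C ^ 2 * (deriv t z₀) ^ 2 + κ * (t z₀) ^ 4) :
    (∀ z ∈ I, 0 < D - κ * (t z) ^ 4) ∧
    (∀ z₁ ∈ I, ∀ z₂ ∈ I,
      z₂ - z₁ = ∫ τ in (t z₁)..(t z₂), 2 * C / Real.sqrt (D - κ * τ ^ 4)) := by
  have hconv : Convex ℝ I := hIconn.convex
  have hC0 : C ≠ 0 := hC.ne'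
  -- differentiability facts
  have hdt : ∀ z ∈ I, HasDerivAt t (deriv t z) z := fun z hz =>
    (((ht.differentiableOn (by norm_num)).differentiableAt
      (hIopen.mem_nhds hz)).hasDerivAt)
  have htder : ContDiffOn ℝ ∞ (deriv t) I := ht.deriv_of_isOpen hIopen (by exact_mod_cast le_top)
  have hdt' : ∀ z ∈ I, HasDerivAt (deriv t) (deriv (deriv t) z) z := fun z hz =>
    ((htder.differentiableOn (by norm_num)).differentiableAt
      (hIopen.mem_nhds hz)).hasDerivAt
  -- the energy function is constant
  set E : ℝ → ℝ := fun z => 4 * C ^ 2 * (deriv t z) ^ 2 + κ * (t z) ^ 4 with hEdef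
  have hEderiv : ∀ z ∈ I, HasDerivAt E 0 z := by
    intro z hz
    have h1 := hdt z hz
    have h2 := hdt' z hz
    have h : HasDerivAt E
        (4 * C ^ 2 * (2 * deriv t z ^ 1 * deriv (deriv t) z)
          + κ * (4 * t z ^ 3 * deriv t z)) z := by
      exact ((h2.pow 2).const_mul _).add ((h1.pow 4).const_mul κ)
    convert h using 1
    rw [hode z hz]
    field_simp
    ring
  have hEdiff : DifferentiableOn ℝ E I := fun z hz =>
    (hEderiv z hz).differentiableAt.differentiableWithinAt
  have hEconst : ∀ z ∈ I, E z = E z₀ := by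
    intro z hz
    refine hconv.is_const_of_fderivWithin_eq_zero hEdiff (fun x hx => ?_) hz hz₀
    rw [fderivWithin_of_isOpen hIopen hx, (hEderiv x hx).hasFDerivAt.fderiv]
    ext y; simp
  have hkey : ∀ z ∈ I, D - κ * (t z) ^ 4 = 4 * C ^ 2 * (deriv t z) ^ 2 := by
    intro z hz
    have := hEconst z hz
    simp only [hEdef] at this
    rw [hD, ← this]; ring
  have hpos : ∀ z ∈ I, 0 < D - κ * (t z) ^ 4 := by
    intro z hz
    rw [hkey z hz]
    exact mul_pos (by positivity) (pow_pos (ht' z hz) 2)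
  refine ⟨hpos, fun z₁ hz₁ z₂ hz₂ => ?_⟩
  have hsub : Set.uIcc z₁ z₂ ⊆ I := hconv.ordConnected.uIcc_subset hz₁ hz₂
  set g : ℝ → ℝ := fun τ => 2 * C / Real.sqrt (D - κ * τ ^ 4) with hgdef
  have hgc : ContinuousOn g (t '' Set.uIcc z₁ z₂) := by
    apply ContinuousOn.div continuousOn_const
    · exact (Real.continuous_sqrt.comp (by continuity)).continuousOn
    · rintro τ ⟨x, hx, rfl⟩
      have hxI := hsub hx
      have := hpos x hxI
      positivity
  have hsubst : (∫ x in z₁..z₂, deriv t x • (g ∘ t) x) = ∫ τ in t z₁..t z₂, g τ :=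
    intervalIntegral.integral_comp_smul_deriv' (fun x hx => hdt x (hsub hx))
      ((htder.continuousOn).mono hsub) hgc
  rw [← hsubst]
  have hone : ∀ x ∈ Set.uIcc z₁ z₂, deriv t x • (g ∘ t) x = 1 := by
    intro x hx
    have hxI := hsub hx
    have ht'x := ht' x hxI
    have hsq : D - κ * (t x) ^ 4 = (2 * C * deriv t x) ^ 2 := by
      rw [hkey x hxI]; ring
    simp only [hgdef, Function.comp_apply, smul_eq_mul, hsq,
      Real.sqrt_sq (by positivity : (0:ℝ) ≤ 2 * C * deriv t x)]
    field_simp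
  rw [intervalIntegral.integral_congr hone]
  simp
end
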